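/- Suppose r is the nonzero Gauss remainder of nonzero a, b ∈ ℤ[i] with φ(r) ≥ φ(b) = n, Im(u_b·b)·Im(u_r·r) < 0, and min(|Re r|,|Im r|) + min(|Re b|,|Im b|) ≤ ℓ∞(r). Then φ(r - (u_b/u_r)·b) < φ(b). -/

import Mathlib

/-!
Multiplying by units, put `x = u_r r = R + iσρ` and `y = u_b b = B - iσβ` with `σ = ±1`,
`R = ℓ∞(r)`, `ρ = m(r)`, `B = ℓ∞(b)`, `β = m(b)`. Since `φ` only depends on `(ℓ∞, m)` and
`r - (u_b/u_r)·b = u_r⁻¹(x - y)`, the claim is `φ(x - y) < φ(b)`, where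
`x - y = (R - B) + iσ(ρ + β)`. Both coordinates of `x · conj y = (RB - ρβ) + iσ(ρB + Rβ)` are at
most `Nm(b)/2` in absolute value, because `r` is a Gauss remainder;
together with `ρ + β ≤ R` this gives `R + ρ ≤ B` and `2R ≤ B + β`. Write `j = v₂(b)` and
`φ(b) = k + 1 + 2j`. Comparing with the bounds that `φ(r) ≥ φ(b)` imposes on `R` and `R + ρ`
shows `v₂(r) > j`, hence `v₂(x - y) = j`, and then `x - y` satisfies the bounds of `φ ≤ k + 2j`.
-/

open GaussianInt

noncomputable section

/-- The sequence w: w_{2k} = 3·2^k, w_{2k+1} = 4·2^k. -/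
def w (n : ℕ) : ℤ := if n % 2 = 0 then 3 * 2 ^ (n / 2) else 4 * 2 ^ (n / 2)

/-- 2-adic valuation of gcd(Re z, Im z). -/
def v2 (z : GaussianInt) : ℕ := padicValNat 2 (Int.gcd z.re z.im)

/-- ℓ₁ norm. -/
def l1 (z : GaussianInt) : ℤ := |z.re| + |z.im|

/-- ℓ∞ norm. -/
def linf (z : GaussianInt) : ℤ := max |z.re| |z.im|

/-- m(z) = min(|Re z|, |Im z|). -/
def mm (z : GaussianInt) : ℤ := min |z.re| |z.im|

/-- The algebraic norm. -/
def Nm (z : GaussianInt) : ℤ := z.re ^ 2 + z.im ^ 2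

/-- Graves' formula for the minimal Euclidean function φ on ℤ[i]. -/
def phi (z : GaussianInt) : ℕ :=
  let j := v2 z
  let n := sInf {n : ℕ | |z.re| ≤ 2 ^ j * (w n - 2) ∧ |z.im| ≤ 2 ^ j * (w n - 2)}
  if l1 z ≤ 2 ^ j * (w (n + 1) - 3) then n + 2 * j else n + 2 * j + 1

/-- Nearest integer, rounding halves down. -/
def nint (x : ℚ) : ℤ := if x - ⌊x⌋ ≤ 1 / 2 then ⌊x⌋ else ⌈x⌉

/-- Gauss quotient: coordinatewise nearest-integer rounding of a·conj(b)/Nm(b). -/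
def gq (a b : GaussianInt) : GaussianInt :=
  ⟨nint (((a.re * b.re + a.im * b.im : ℤ) : ℚ) / ((b.re ^ 2 + b.im ^ 2 : ℤ) : ℚ)),
   nint (((a.im * b.re - a.re * b.im : ℤ) : ℚ) / ((b.re ^ 2 + b.im ^ 2 : ℤ) : ℚ))⟩

/-- Gauss remainder. -/
def gr (a b : GaussianInt) : GaussianInt := a - gq a b * b

/-- The imaginary unit in ℤ[i]. -/
def Ii : GaussianInt := ⟨0, 1⟩

/-- The canonical unit u_z. -/
def uz (z : GaussianInt) : GaussianInt :=
  if |z.re| > |z.im| then (if 0 < z.re then 1 else -1)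
  else if |z.im| > |z.re| then (if 0 < z.im then -Ii else Ii)
  else if 0 < z.re then (if 0 < z.im then 1 else Ii)
  else (if 0 < z.im then -Ii else -1)

/-- s(z) = sgn(Im(u_z·z)). -/
def sfun (z : GaussianInt) : ℤ := Int.sign ((uz z * z).im)

lemma w_two_mul (s : ℕ) : w (2 * s) = 3 * 2 ^ s := by
  rw [w, if_pos (by omega), Nat.mul_div_cancel_left s two_pos]

lemma w_two_mul_add_one (s : ℕ) : w (2 * s + 1) = 4 * 2 ^ s := by
  rw [w, if_neg (by omega), show (2 * s + 1) / 2 = s by omega]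

lemma w_add_two (n : ℕ) : w (n + 2) = 2 * w n := by
  rcases Nat.even_or_odd' n with ⟨s, rfl | rfl⟩
  · rw [show 2 * s + 2 = 2 * (s + 1) by ring, w_two_mul, w_two_mul, pow_succ]; ring
  · rw [show 2 * s + 1 + 2 = 2 * (s + 1) + 1 by ring, w_two_mul_add_one, w_two_mul_add_one,
      pow_succ]; ring

lemma w_add_two_mul (n k : ℕ) : w (n + 2 * k) = 2 ^ k * w n := by
  induction k with
  | zero => simp
  | succ k ih => rw [Nat.mul_succ, ← add_assoc, w_add_two, ih, pow_succ]; ring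

lemma two_pow_mul_w_eq {i j k l : ℕ} (h : k + 2 * i = l + 2 * j) :
    2 ^ i * w k = 2 ^ j * w l := by
  rcases le_total i j with hij | hij
  · rw [show k = l + 2 * (j - i) by omega, w_add_two_mul, ← mul_assoc, ← pow_add,
      Nat.add_sub_cancel' hij]
  · rw [show l = k + 2 * (i - j) by omega, w_add_two_mul, ← mul_assoc, ← pow_add,
      Nat.add_sub_cancel' hij]

lemma w_succ (n : ℕ) : w (n + 1) = w n + 2 ^ ((n + 1) / 2) := by
  rcases Nat.even_or_odd' n with ⟨s, rfl | rfl⟩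
  · rw [w_two_mul_add_one, w_two_mul, show (2 * s + 1) / 2 = s by omega]; ring
  · rw [show 2 * s + 1 + 1 = 2 * (s + 1) by ring, w_two_mul, w_two_mul_add_one,
      Nat.mul_div_cancel_left _ two_pos, pow_succ]; ring

lemma two_mul_two_pow_le_w (n : ℕ) : 2 * 2 ^ ((n + 1) / 2) ≤ w n := by
  rcases Nat.even_or_odd' n with ⟨s, rfl | rfl⟩
  · rw [w_two_mul, show (2 * s + 1) / 2 = s by omega]
    linarith [pow_pos (two_pos : (0 : ℤ) < 2) s]
  · rw [w_two_mul_add_one, show (2 * s + 1 + 1) / 2 = s + 1 by omega, pow_succ]; linarith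

lemma w_mono : Monotone w :=
  monotone_nat_of_le_succ fun n => by
    rw [w_succ]; linarith [pow_pos (two_pos : (0 : ℤ) < 2) ((n + 1) / 2)]

lemma natCast_add_three_le_w (n : ℕ) : (n : ℤ) + 3 ≤ w n := by
  induction n with
  | zero => simp [w]
  | succ n ih =>
    rw [w_succ]; push_cast; linarith [one_le_pow₀ (one_le_two : (1 : ℤ) ≤ 2) (n := (n + 1) / 2)]

lemma two_dvd_w {n : ℕ} (hn : n ≠ 0) : 2 ∣ w n := by
  rcases Nat.even_or_odd' n with ⟨s, rfl | rfl⟩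
  · obtain ⟨t, rfl⟩ : ∃ t, s = t + 1 := ⟨s - 1, by omega⟩
    exact ⟨3 * 2 ^ t, by rw [w_two_mul, pow_succ]; ring⟩
  · exact ⟨2 * 2 ^ s, by rw [w_two_mul_add_one]; ring⟩

lemma l1_eq_linf_add_mm (z : GaussianInt) : l1 z = linf z + mm z := by
  rw [l1, linf, mm, max_add_min]

lemma mm_le_linf (z : GaussianInt) : mm z ≤ linf z := min_le_max

lemma Nm_eq_linf_sq_add_mm_sq (z : GaussianInt) : Nm z = linf z ^ 2 + mm z ^ 2 := by
  rcases le_total |z.re| |z.im| with h | h <;>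
    simp [Nm, linf, mm, h, sq_abs, add_comm]

lemma linf_eq_and_mm_eq_of_abs_im_le {z : GaussianInt} (h : |z.im| ≤ z.re) :
    linf z = z.re ∧ mm z = |z.im| := by
  have : |z.re| = z.re := abs_of_nonneg ((abs_nonneg _).trans h)
  rw [linf, mm, this, max_eq_left h, min_eq_right h]
  exact ⟨rfl, rfl⟩

lemma abs_im_sub_of_mul_neg {x y : GaussianInt} (hxy : x.im * y.im < 0) :
    |(x - y).im| = |x.im| + |y.im| := by
  rw [Zsqrtd.im_sub]
  rcases mul_neg_iff.1 hxy with ⟨h1, h2⟩ | ⟨h1, h2⟩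
  · rw [abs_of_pos h1, abs_of_neg h2, abs_of_pos (by linarith)]; ring
  · rw [abs_of_neg h1, abs_of_pos h2, abs_of_neg (by linarith)]; ring

lemma gcd_linf_mm (z : GaussianInt) : Int.gcd (linf z) (mm z) = Int.gcd z.re z.im := by
  rcases le_total |z.re| |z.im| with h | h <;>
    simp [linf, mm, h, Int.gcd, Int.natAbs_abs, Nat.gcd_comm]

lemma pow_v2_dvd (z : GaussianInt) : (2 : ℤ) ^ v2 z ∣ z.re ∧ (2 : ℤ) ^ v2 z ∣ z.im := by
  exact_mod_cast Int.dvd_gcd_iff.1 (pow_padicValNat_dvd (p := 2) (n := Int.gcd z.re z.im))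

lemma pow_dvd_iff_le_v2 {z : GaussianInt} (hz : z ≠ 0) (k : ℕ) :
    (2 : ℤ) ^ k ∣ z.re ∧ (2 : ℤ) ^ k ∣ z.im ↔ k ≤ v2 z := by
  have hgcd : Int.gcd z.re z.im ≠ 0 := fun h =>
    hz (Zsqrtd.ext (Int.gcd_eq_zero_iff.1 h).1 (Int.gcd_eq_zero_iff.1 h).2)
  rw [v2, ← padicValNat_dvd_iff_le hgcd, Int.dvd_gcd_iff]
  push_cast
  rfl

lemma v2_sub_of_lt {x y : GaussianInt} (hy : y ≠ 0) (h : v2 y < v2 x) : v2 (x - y) = v2 y := by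
  have hxy : x - y ≠ 0 := fun h0 => h.ne (by rw [sub_eq_zero.1 h0])
  have hx := (pow_dvd_iff_le_v2 (fun hx => by simp [hx, v2] at h) (v2 y + 1)).2 h
  apply le_antisymm
  · by_contra! hlt
    obtain ⟨h1, h2⟩ := (pow_dvd_iff_le_v2 hxy (v2 y + 1)).2 hlt
    have := (pow_dvd_iff_le_v2 hy (v2 y + 1)).1
      ⟨by simpa using dvd_sub hx.1 h1, by simpa using dvd_sub hx.2 h2⟩
    omega
  · rw [← pow_dvd_iff_le_v2 hxy, Zsqrtd.re_sub, Zsqrtd.im_sub]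
    have hy' := pow_v2_dvd y
    exact ⟨dvd_sub ((pow_dvd_pow 2 h.le).trans (pow_v2_dvd x).1) hy'.1,
      dvd_sub ((pow_dvd_pow 2 h.le).trans (pow_v2_dvd x).2) hy'.2⟩

/-- The index `n` in the definition of `phi`. -/
def level (z : GaussianInt) : ℕ :=
  sInf {n : ℕ | |z.re| ≤ 2 ^ v2 z * (w n - 2) ∧ |z.im| ≤ 2 ^ v2 z * (w n - 2)}

lemma phi_eq_ite (z : GaussianInt) :
    phi z = if l1 z ≤ 2 ^ v2 z * (w (level z + 1) - 3) then level z + 2 * v2 z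
      else level z + 2 * v2 z + 1 := rfl

lemma level_le_iff (z : GaussianInt) (k : ℕ) :
    level z ≤ k ↔ linf z ≤ 2 ^ v2 z * (w k - 2) := by
  have hS : ∀ n, n ∈ {n : ℕ | |z.re| ≤ 2 ^ v2 z * (w n - 2) ∧ |z.im| ≤ 2 ^ v2 z * (w n - 2)} ↔
      linf z ≤ 2 ^ v2 z * (w n - 2) := fun n => max_le_iff.symm
  have hpow : (1 : ℤ) ≤ 2 ^ v2 z := one_le_pow₀ (by norm_num)
  constructor
  · intro hk
    have hne : linf z ≤ 2 ^ v2 z * (w (linf z).toNat - 2) := by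
      nlinarith [natCast_add_three_le_w (linf z).toNat, Int.self_le_toNat (linf z)]
    have hmem : linf z ≤ 2 ^ v2 z * (w (level z) - 2) :=
      (hS _).1 (Nat.sInf_mem (s := {n : ℕ | _}) ⟨_, (hS _).2 hne⟩)
    exact hmem.trans (mul_le_mul_of_nonneg_left (by linarith [w_mono hk]) (by positivity))
  · exact fun hk => Nat.sInf_le ((hS k).2 hk)

lemma phi_le_iff (z : GaussianInt) (k : ℕ) :
    phi z ≤ k + 2 * v2 z ↔
      linf z ≤ 2 ^ v2 z * (w k - 2) ∧ l1 z ≤ 2 ^ v2 z * (w (k + 1) - 3) := by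
  have hpow : (0 : ℤ) < 2 ^ v2 z := by positivity
  have hlevel := (level_le_iff z (level z)).1 le_rfl
  have hl1 : l1 z ≤ 2 * linf z := by rw [l1_eq_linf_add_mm]; linarith [mm_le_linf z]
  rw [phi_eq_ite, ← level_le_iff]
  split_ifs with h
  · refine ⟨fun hk => ⟨by omega, h.trans ?_⟩, fun hk => by omega⟩
    have := w_mono (show level z + 1 ≤ k + 1 by omega)
    exact mul_le_mul_of_nonneg_left (by linarith) hpow.le
  · constructor
    · intro hk
      refine ⟨by omega, hl1.trans ?_⟩
      have := w_mono (show level z + 2 ≤ k + 1 by omega)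
      rw [w_add_two] at this
      nlinarith
    · rintro ⟨hk, hk'⟩
      rcases Nat.lt_or_eq_of_le hk with hlt | rfl
      · omega
      · exact absurd hk' h

lemma phi_congr {z z' : GaussianInt} (hlinf : linf z = linf z') (hmm : mm z = mm z') :
    phi z = phi z' := by
  have hv2 : v2 z = v2 z' := by rw [v2, v2, ← gcd_linf_mm, ← gcd_linf_mm, hlinf, hmm]
  have hlevel : level z = level z' :=
    le_antisymm ((level_le_iff _ _).2 (by rw [hlinf, hv2]; exact (level_le_iff _ _).1 le_rfl))
      ((level_le_iff _ _).2 (by rw [← hlinf, ← hv2]; exact (level_le_iff _ _).1 le_rfl))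
  rw [phi_eq_ite, phi_eq_ite, l1_eq_linf_add_mm, l1_eq_linf_add_mm, hlinf, hmm, hv2, hlevel]

lemma two_mul_v2_lt_phi {z : GaussianInt} (hz : 0 < mm z) : 2 * v2 z < phi z := by
  by_contra! h
  obtain ⟨h₁, h₂⟩ := (phi_le_iff z 0).1 (by omega)
  have hdvd : (2 : ℤ) ^ v2 z ∣ linf z := by
    obtain ⟨hre, him⟩ := pow_v2_dvd z
    rcases max_choice |z.re| |z.im| with h | h <;> rw [linf, h]
    exacts [(dvd_abs _ _).2 hre, (dvd_abs _ _).2 him]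
  have := Int.le_of_dvd (hz.trans_le (mm_le_linf z)) hdvd
  rw [l1_eq_linf_add_mm] at h₂
  norm_num [w] at h₁ h₂
  linarith

lemma lt_linf_or_lt_l1_of_le_phi {z : GaussianInt} {j k : ℕ} (hphi : k + 1 + 2 * j ≤ phi z)
    (hk : 2 * v2 z ≤ k + 2 * j) :
    2 ^ j * w k - 2 ^ (v2 z + 1) < linf z ∨ 2 ^ j * w (k + 1) - 3 * 2 ^ v2 z < l1 z := by
  by_contra! h
  have e₁ : 2 ^ v2 z * w (k + 2 * j - 2 * v2 z) = 2 ^ j * w k := two_pow_mul_w_eq (by omega)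
  have e₂ : 2 ^ v2 z * w (k + 2 * j - 2 * v2 z + 1) = 2 ^ j * w (k + 1) :=
    two_pow_mul_w_eq (by omega)
  have := (phi_le_iff z (k + 2 * j - 2 * v2 z)).2
    ⟨by rw [mul_sub, e₁]; linarith [h.1, pow_succ (2 : ℤ) (v2 z)], by rw [mul_sub, e₂]; linarith⟩
  omega

lemma star_mul_self_of_isUnit {u : GaussianInt} (hu : IsUnit u) : star u * u = 1 := by
  rw [mul_comm, ← Zsqrtd.norm_eq_mul_conj, (Zsqrtd.norm_eq_one_iff' (by norm_num) u).2 hu]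
  rfl

lemma linf_mul_eq_and_mm_mul_eq_of_isUnit {u : GaussianInt} (hu : IsUnit u) (z : GaussianInt) :
    linf (u * z) = linf z ∧ mm (u * z) = mm z := by
  obtain ⟨a, b⟩ := u
  have hn : a * a + b * b = 1 := by
    simpa [Zsqrtd.norm_def] using (Zsqrtd.norm_eq_one_iff' (by norm_num) _).2 hu
  obtain ⟨ha₁, ha₂⟩ : -1 ≤ a ∧ a ≤ 1 := ⟨by nlinarith, by nlinarith⟩
  obtain ⟨hb₁, hb₂⟩ : -1 ≤ b ∧ b ≤ 1 := ⟨by nlinarith, by nlinarith⟩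
  interval_cases a <;> interval_cases b <;> norm_num at hn <;>
    simp [linf, mm, Zsqrtd.re_mul, Zsqrtd.im_mul, max_comm, min_comm]

lemma phi_mul_of_isUnit {u : GaussianInt} (hu : IsUnit u) (z : GaussianInt) :
    phi (u * z) = phi z :=
  have h := linf_mul_eq_and_mm_mul_eq_of_isUnit hu z
  phi_congr h.1 h.2

lemma isUnit_uz (z : GaussianInt) : IsUnit (uz z) := by
  have hI : IsUnit Ii := IsUnit.of_mul_eq_one (-Ii) (by ext <;> simp [Ii])
  unfold uz
  split_ifs <;> simp [hI]

lemma re_uz_mul_eq_linf_and_abs_im_eq_mm (z : GaussianInt) :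
    (uz z * z).re = linf z ∧ |(uz z * z).im| = mm z := by
  unfold uz linf mm
  rcases abs_cases z.re with ⟨e1, e2⟩ | ⟨e1, e2⟩ <;>
    rcases abs_cases z.im with ⟨f1, f2⟩ | ⟨f1, f2⟩ <;>
    split_ifs <;>
    simp only [Ii, e1, f1, max_def, min_def, one_mul, neg_mul, zero_mul, mul_one, zero_add,
      neg_neg, abs_neg, Zsqrtd.re_neg, Zsqrtd.im_neg, Zsqrtd.re_mul, Zsqrtd.im_mul] <;>
    split_ifs <;> omega

lemma abs_sub_nint_le (x : ℚ) : |x - nint x| ≤ 1 / 2 := by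
  have hfl := Int.floor_le x
  have hce := Int.le_ceil x
  have hcf : (⌈x⌉ : ℚ) ≤ ⌊x⌋ + 1 := by exact_mod_cast Int.ceil_le_floor_add_one x
  unfold nint
  split_ifs with h <;> rw [abs_le] <;> constructor <;> linarith

lemma two_mul_abs_sub_nint_mul_le (x N : ℤ) (hN : 0 < N) :
    2 * |x - nint ((x : ℚ) / N) * N| ≤ N := by
  have hNq : (0 : ℚ) < N := by exact_mod_cast hN
  have key : ((x - nint ((x : ℚ) / N) * N : ℤ) : ℚ) =
      N * ((x : ℚ) / N - nint ((x : ℚ) / N)) := by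
    push_cast; field_simp
  have := abs_sub_nint_le ((x : ℚ) / N)
  have hq : 2 * |((x - nint ((x : ℚ) / N) * N : ℤ) : ℚ)| ≤ N := by
    rw [key, abs_mul, abs_of_pos hNq]; nlinarith
  exact_mod_cast hq

lemma two_mul_linf_gr_mul_star_le (a : GaussianInt) {b : GaussianInt} (hb : b ≠ 0) :
    2 * linf (gr a b * star b) ≤ Nm b := by
  have hN : 0 < b.re ^ 2 + b.im ^ 2 := by
    simpa [Zsqrtd.norm_def, sq] using GaussianInt.norm_pos.2 hb
  rw [linf, mul_max_of_nonneg _ _ zero_le_two, Nm]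
  have hre : (gr a b * star b).re = (a.re * b.re + a.im * b.im) -
      nint (((a.re * b.re + a.im * b.im : ℤ) : ℚ) / ((b.re ^ 2 + b.im ^ 2 : ℤ) : ℚ)) *
        (b.re ^ 2 + b.im ^ 2) := by
    simp only [gr, gq, Zsqrtd.re_sub, Zsqrtd.im_sub, Zsqrtd.re_mul, Zsqrtd.im_mul,
      Zsqrtd.re_star, Zsqrtd.im_star]
    ring
  have him : (gr a b * star b).im = (a.im * b.re - a.re * b.im) -
      nint (((a.im * b.re - a.re * b.im : ℤ) : ℚ) / ((b.re ^ 2 + b.im ^ 2 : ℤ) : ℚ)) *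
        (b.re ^ 2 + b.im ^ 2) := by
    simp only [gr, gq, Zsqrtd.re_sub, Zsqrtd.im_sub, Zsqrtd.re_mul, Zsqrtd.im_mul,
      Zsqrtd.re_star, Zsqrtd.im_star]
    ring
  rw [hre, him]
  exact max_le (two_mul_abs_sub_nint_mul_le _ _ hN) (two_mul_abs_sub_nint_mul_le _ _ hN)

lemma sq_bounds_of_two_mul_linf_mul_star_le {x y : GaussianInt} (hxy : x.im * y.im < 0)
    (h : 2 * linf (x * star y) ≤ Nm y) :
    2 * (x.re * y.re - |x.im| * |y.im|) ≤ y.re ^ 2 + |y.im| ^ 2 ∧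
      2 * (|x.im| * y.re + x.re * |y.im|) ≤ y.re ^ 2 + |y.im| ^ 2 := by
  rw [linf, mul_max_of_nonneg _ _ zero_le_two, max_le_iff] at h
  have hre := (mul_le_mul_of_nonneg_left (le_abs_self (x * star y).re) zero_le_two).trans h.1
  have him := (mul_le_mul_of_nonneg_left (le_abs_self (x * star y).im) zero_le_two).trans h.2
  have him' := (mul_le_mul_of_nonneg_left (neg_le_abs (x * star y).im) zero_le_two).trans h.2
  simp only [Zsqrtd.re_mul, Zsqrtd.im_mul, Zsqrtd.re_star, Zsqrtd.im_star, Nm] at hre him him'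
  rw [sq_abs]
  rcases mul_neg_iff.1 hxy with ⟨h1, h2⟩ | ⟨h1, h2⟩
  · rw [abs_of_pos h1, abs_of_neg h2]; constructor <;> linarith
  · rw [abs_of_neg h1, abs_of_pos h2]; constructor <;> linarith

section Arithmetic

/- `(B, β)` and `(R, ρ)` stand for `(ℓ∞, m)` of the normalized `b` and `r`, `j` and `i` for their
valuations `v2`, and `φ(b) = k + 1 + 2j`; hypothesis `hr` is what `φ(r) ≥ φ(b)` says about `R` and
`R + ρ`, see `lt_linf_or_lt_l1_of_le_phi`. -/
variable {B β R ρ : ℤ} {i j k : ℕ}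

lemma add_le_and_two_mul_le_of_sq_bounds (hρ : 0 ≤ ρ) (hβ : 0 < β) (hβB : β ≤ B)
    (hρR : ρ + β ≤ R) (h₁ : 2 * (R * B - ρ * β) ≤ B ^ 2 + β ^ 2)
    (h₂ : 2 * (ρ * B + R * β) ≤ B ^ 2 + β ^ 2) :
    R + ρ ≤ B ∧ 2 * R ≤ B + β := by
  have key : 2 * R * (B - β) ≤ (B - β) * (B + β) := by
    nlinarith [mul_le_mul_of_nonneg_right (show ρ ≤ R - β by linarith) hβ.le]
  have hRρ : R + ρ ≤ B := by
    by_contra! h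
    nlinarith [mul_le_mul_of_nonneg_right (show B + 1 ≤ R + ρ by linarith)
      (show 0 ≤ 2 * B by linarith)]
  refine ⟨hRρ, ?_⟩
  rcases hβB.lt_or_eq with hlt | rfl
  · by_contra! h
    nlinarith [mul_lt_mul_of_pos_left h (sub_pos.2 hlt)]
  · linarith

lemma two_pow_succ_dvd_mul_w_sub_two (j k : ℕ) :
    (2 : ℤ) ^ (j + 1) ∣ 2 ^ j * (w (k + 1) - 2) := by
  obtain ⟨t, ht⟩ := two_dvd_w k.succ_ne_zero
  exact ⟨t - 1, by rw [ht, pow_succ]; ring⟩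

lemma lt_of_exceeds_level (hodd : ¬((2 : ℤ) ^ (j + 1) ∣ B ∧ (2 : ℤ) ^ (j + 1) ∣ β))
    (hiR : (2 : ℤ) ^ i ∣ R) (hiρ : (2 : ℤ) ^ i ∣ ρ)
    (hB : B ≤ 2 ^ j * (w (k + 1) - 2)) (hBβ : B + β ≤ 2 ^ j * (w (k + 2) - 3))
    (hρR : ρ + β ≤ R) (hRρ : R + ρ ≤ B) (h2R : 2 * R ≤ B + β)
    (hr : 2 * i ≤ k + 2 * j →
      2 ^ j * w k - 2 ^ (i + 1) < R ∨ 2 ^ j * w (k + 1) - 3 * 2 ^ i < R + ρ) :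
    j < i := by
  by_contra! hij
  have hdvd : (2 : ℤ) ^ i ∣ 2 ^ j := pow_dvd_pow 2 hij
  have hle : (2 : ℤ) ^ i ≤ 2 ^ j := pow_le_pow_right₀ one_le_two hij
  rw [w_add_two] at hBβ
  rcases hr (by omega) with hA | hC
  · have := Int.le_of_dvd (sub_pos.2 hA)
      (dvd_sub hiR (dvd_sub (hdvd.mul_right _) (pow_dvd_pow 2 (Nat.le_succ i))))
    rw [pow_succ] at this
    linarith [pow_pos (two_pos : (0 : ℤ) < 2) j]
  · have := Int.le_of_dvd (sub_pos.2 hC)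
      (dvd_sub (dvd_add hiR hiρ) (dvd_sub (hdvd.mul_right _) (dvd_mul_left _ _)))
    obtain rfl : i = j := le_antisymm hij
      ((pow_le_pow_iff_right₀ one_lt_two).1 (by linarith : (2 : ℤ) ^ j ≤ 2 ^ i))
    have hB' : B = 2 ^ i * (w (k + 1) - 2) := by linarith
    have h2B : (2 : ℤ) ^ (i + 1) ∣ B := hB' ▸ two_pow_succ_dvd_mul_w_sub_two i k
    have h2R' : (2 : ℤ) ^ (i + 1) ∣ 2 * R := by
      rw [pow_succ, mul_comm 2 R]; exact mul_dvd_mul_right hiR 2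
    exact hodd ⟨h2B, by simpa [show β = 2 * R - B by linarith] using dvd_sub h2R' h2B⟩

lemma le_two_pow_mul_sub_two {W : ℤ} (hR : (2 : ℤ) ^ (j + 1) ∣ R)
    (h : 2 * R ≤ 2 ^ j * (2 * W - 3)) : R ≤ 2 ^ j * (W - 2) := by
  obtain ⟨t, rfl⟩ := hR
  have hpos : (0 : ℤ) < 2 ^ j := by positivity
  have : 4 * t ≤ 2 * W - 3 :=
    le_of_mul_le_mul_left (by rw [pow_succ] at h; linarith) hpos
  calc 2 ^ (j + 1) * t = 2 ^ j * (2 * t) := by ring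
    _ ≤ 2 ^ j * (W - 2) := mul_le_mul_of_nonneg_left (by omega) hpos.le

lemma sub_add_add_le (hjB : (2 : ℤ) ^ j ∣ B) (hjβ : (2 : ℤ) ^ j ∣ β)
    (hodd : ¬((2 : ℤ) ^ (j + 1) ∣ B ∧ (2 : ℤ) ^ (j + 1) ∣ β))
    (hR : (2 : ℤ) ^ (j + 1) ∣ R) (hρ : (2 : ℤ) ^ (j + 1) ∣ ρ)
    (hB : B ≤ 2 ^ j * (w (k + 1) - 2)) (hρR : ρ + β ≤ R) :
    B - R + (ρ + β) ≤ 2 ^ j * (w (k + 1) - 3) := by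
  have hlt : B - R + (ρ + β) < 2 ^ j * (w (k + 1) - 2) := by
    refine lt_of_le_of_ne (by linarith) fun heq => hodd ⟨?_, ?_⟩
    · exact (show B = 2 ^ j * (w (k + 1) - 2) by linarith) ▸ two_pow_succ_dvd_mul_w_sub_two j k
    · simpa [show β = R - ρ by linarith] using dvd_sub hR hρ
  have hdvd : (2 : ℤ) ^ j ∣ B - R + (ρ + β) :=
    dvd_add (dvd_sub hjB ((pow_dvd_pow 2 j.le_succ).trans hR))
      (dvd_add ((pow_dvd_pow 2 j.le_succ).trans hρ) hjβ)
  have := Int.le_of_dvd (sub_pos.2 hlt) (dvd_sub (dvd_mul_right _ _) hdvd)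
  linarith [show (2 : ℤ) ^ j * (w (k + 1) - 3) = 2 ^ j * (w (k + 1) - 2) - 2 ^ j by ring]

lemma two_pow_mul_two_pow_le (hR : 0 < R) (hiR : (2 : ℤ) ^ i ∣ R) (hρR : ρ ≤ R)
    (hr : 2 * i ≤ k + 2 * j →
      2 ^ j * w k - 2 ^ (i + 1) < R ∨ 2 ^ j * w (k + 1) - 3 * 2 ^ i < R + ρ) :
    2 ^ j * 2 ^ ((k + 1) / 2) ≤ R := by
  rw [← pow_add]
  rcases le_or_gt (j + (k + 1) / 2) i with h | h
  · exact (pow_le_pow_right₀ one_le_two h).trans (Int.le_of_dvd hR hiR)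
  · have hc : (0 : ℤ) < 2 ^ i := by positivity
    have h2c : (2 : ℤ) ^ (i + 1) ≤ 2 ^ (j + (k + 1) / 2) := pow_le_pow_right₀ one_le_two h
    have hW : 2 * 2 ^ (j + (k + 1) / 2) ≤ 2 ^ j * w k := by
      rw [pow_add, mul_left_comm]
      exact mul_le_mul_of_nonneg_left (two_mul_two_pow_le_w k) (by positivity)
    have hw : 2 ^ j * w (k + 1) = 2 ^ j * w k + 2 ^ (j + (k + 1) / 2) := by
      rw [w_succ, pow_add]; ring
    by_contra! hRE
    have := Int.le_of_dvd (sub_pos.2 hRE) (dvd_sub (pow_dvd_pow 2 h.le) hiR)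
    rw [pow_succ] at h2c
    rcases hr (by omega) with hA | hC
    · rw [pow_succ] at hA; linarith
    · linarith

end Arithmetic

lemma phi_sub_lt_of_two_mul_linf_mul_star_le {x y : GaussianInt} (hy : |y.im| ≤ y.re)
    (hxy : x.im * y.im < 0) (hmm : |x.im| + |y.im| ≤ x.re) (hgauss : 2 * linf (x * star y) ≤ Nm y)
    (hphi : phi y ≤ phi x) :
    phi (x - y) < phi y := by
  obtain ⟨hlx, hmx⟩ := linf_eq_and_mm_eq_of_abs_im_le (by linarith [abs_nonneg y.im])
  obtain ⟨hly, hmy⟩ := linf_eq_and_mm_eq_of_abs_im_le hy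
  have hβ : 0 < |y.im| := abs_pos.2 (right_ne_zero_of_mul hxy.ne)
  have hy0 : y ≠ 0 := fun h => by simp [h] at hβ
  obtain ⟨h₁, h₂⟩ := sq_bounds_of_two_mul_linf_mul_star_le hxy hgauss
  obtain ⟨hRρ, h2R⟩ :=
    add_le_and_two_mul_le_of_sq_bounds (abs_nonneg x.im) hβ hy (by linarith) h₁ h₂
  obtain ⟨k, hk⟩ : ∃ k, phi y = k + 1 + 2 * v2 y :=
    ⟨phi y - 2 * v2 y - 1, by have := two_mul_v2_lt_phi (hmy ▸ hβ); omega⟩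
  obtain ⟨hB, hBβ⟩ := (phi_le_iff y (k + 1)).1 hk.le
  rw [hly] at hB
  rw [l1_eq_linf_add_mm, hly, hmy] at hBβ
  have hr (h : 2 * v2 x ≤ k + 2 * v2 y) := by
    simpa only [l1_eq_linf_add_mm, hlx, hmx] using lt_linf_or_lt_l1_of_le_phi (hk ▸ hphi) h
  obtain ⟨hyre, hyim⟩ := pow_v2_dvd y
  obtain ⟨hxre, hxim⟩ := pow_v2_dvd x
  have hodd : ¬((2 : ℤ) ^ (v2 y + 1) ∣ y.re ∧ (2 : ℤ) ^ (v2 y + 1) ∣ |y.im|) := by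
    rw [dvd_abs, pow_dvd_iff_le_v2 hy0]; omega
  have hji : v2 y < v2 x := lt_of_exceeds_level hodd hxre ((dvd_abs _ _).2 hxim) hB hBβ
    (by linarith) hRρ h2R hr
  have hx' : (2 : ℤ) ^ (v2 y + 1) ∣ x.re ∧ (2 : ℤ) ^ (v2 y + 1) ∣ |x.im| :=
    ⟨(pow_dvd_pow 2 hji).trans hxre, (dvd_abs _ _).2 ((pow_dvd_pow 2 hji).trans hxim)⟩
  have hre : |(x - y).re| = y.re - x.re := by
    rw [Zsqrtd.re_sub, abs_sub_comm, abs_of_nonneg (by linarith [abs_nonneg x.im])]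
  have hv2 := v2_sub_of_lt hy0 hji
  have hle : phi (x - y) ≤ k + 2 * v2 (x - y) := by
    rw [phi_le_iff, hv2, linf, l1, hre, abs_im_sub_of_mul_neg hxy]
    refine ⟨max_le ?_ ?_, ?_⟩
    · have := two_pow_mul_two_pow_le (by linarith [abs_nonneg x.im]) hxre (by linarith) hr
      rw [w_succ] at hB
      linarith
    · rw [w_add_two] at hBβ
      exact (le_two_pow_mul_sub_two hx'.1 (by linarith)).trans' (by linarith)
    · exact sub_add_add_le hyre ((dvd_abs _ _).2 hyim) hodd hx'.1 hx'.2 hB (by linarith)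
  omega

theorem stmt18_general (a b r : GaussianInt) (hb : b ≠ 0) (hr : r = gr a b)
    (hphi : phi r ≥ phi b)
    (him : (uz b * b).im * (uz r * r).im < 0)
    (hm : mm r + mm b ≤ linf r) :
    phi (r - uz b * star (uz r) * b) < phi b := by
  obtain ⟨hr_re, hr_im⟩ := re_uz_mul_eq_linf_and_abs_im_eq_mm r
  obtain ⟨hb_re, hb_im⟩ := re_uz_mul_eq_linf_and_abs_im_eq_mm b
  have hsub : r - uz b * star (uz r) * b = star (uz r) * (uz r * r - uz b * b) := by
    linear_combination (-r) * star_mul_self_of_isUnit (isUnit_uz r)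
  have hgauss : 2 * linf (uz r * r * star (uz b * b)) ≤ Nm (uz b * b) := by
    have hu := linf_mul_eq_and_mm_mul_eq_of_isUnit ((isUnit_uz r).mul (isUnit_uz b).star)
      (r * star b)
    have hub := linf_mul_eq_and_mm_mul_eq_of_isUnit (isUnit_uz b) b
    rw [star_mul, show uz r * r * (star b * star (uz b)) = uz r * star (uz b) * (r * star b) by
      ring, hu.1, Nm_eq_linf_sq_add_mm_sq, hub.1, hub.2, ← Nm_eq_linf_sq_add_mm_sq, hr]
    exact two_mul_linf_gr_mul_star_le a hb
  rw [hsub, phi_mul_of_isUnit (isUnit_uz r).star, ← phi_mul_of_isUnit (isUnit_uz b) b]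
  refine phi_sub_lt_of_two_mul_linf_mul_star_le ?_ (mul_comm (uz b * b).im _ ▸ him) ?_ hgauss ?_
  · rw [hb_re, hb_im]; exact mm_le_linf b
  · rw [hr_re, hr_im, hb_im]; exact hm
  · rwa [phi_mul_of_isUnit (isUnit_uz r), phi_mul_of_isUnit (isUnit_uz b)]

theorem stmt18 (a b r : GaussianInt) (n : ℕ) (ha : a ≠ 0) (hb : b ≠ 0) (hr : r = gr a b)
    (hr0 : r ≠ 0) (hphi : phi r ≥ phi b) (hn : phi b = n)
    (him : (uz b * b).im * (uz r * r).im < 0)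
    (hm : mm r + mm b ≤ linf r) :
    phi (r - uz b * star (uz r) * b) < phi b :=
  stmt18_general a b r hb hr hphi him hm
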